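/- arXiv:2405.08937 — 6 statements merged into one kernel-verified Lean document; each statement's English description precedes it below -/
import Mathlib

section
/- Let G be a finite group, n a positive integer, and k a positive divisor of n. The number of n-tuples (a₁,...,aₙ) ∈ Gⁿ with a₁a₂⋯aₙ = 1 that are fixed by cyclic rotation by k steps equals [G ÷ (n/k)] · |G|^{k-1}, where [G ÷ m] denotes the number of elements g ∈ G with g^m = 1. -/
/-!
A tuple fixed by rotation by `k` is the `k`-periodic extension of its first `k` entries
`c₀, …, c_{k-1}`, and its product is `(c₀ ⋯ c_{k-1}) ^ (n / k)`. A `k`-tuple whose product `g`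
satisfies `g ^ (n / k) = 1` is in turn freely determined by `g` and `c₁, …, c_{k-1}`, since
`c₀ = g (c₁ ⋯ c_{k-1})⁻¹`.
-/

open Fin.NatCast

theorem Function.Periodic.apply_eq_apply_val_mod {α : Type*} {n k : ℕ} [NeZero n]
    {a : Fin n → α} (ha : Function.Periodic a (k : Fin n)) (i : Fin n) :
    a i = a ((i % k : ℕ) : Fin n) := by
  -- `Fin n` carries no ring instance here, so `nsmul_eq_mul` is not available.
  have hsmul (m : ℕ) : m • (k : Fin n) = ((k * m : ℕ) : Fin n) := by
    induction m with
    | zero => simp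
    | succ m ih => rw [succ_nsmul, ih, Nat.mul_succ, Nat.cast_add]
  calc a i = a (((i % k : ℕ) : Fin n) + ((i : ℕ) / k) • (k : Fin n)) := by
        rw [hsmul, ← Nat.cast_add, Nat.mod_add_div, Fin.cast_val_eq_self]
    _ = _ := ha.nsmul _ _

namespace Fin

section Periodic

variable {α : Type*} {n k : ℕ} [NeZero k]

theorem periodic_comp_natCast_val [NeZero n] (hkn : k ∣ n) (c : Fin k → α) :
    Function.Periodic (fun i : Fin n => c (i : ℕ)) (k : Fin n) := fun i => by
  refine congrArg c (Fin.ext ?_)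
  rw [val_natCast, val_natCast, val_add, val_natCast, Nat.mod_mod_of_dvd _ hkn,
    Nat.add_mod, Nat.mod_mod_of_dvd _ hkn, Nat.mod_self, Nat.add_zero, Nat.mod_mod]

def periodicEquiv [NeZero n] (hkn : k ∣ n) :
    {a : Fin n → α // Function.Periodic a (k : Fin n)} ≃ (Fin k → α) where
  toFun a j := a.1 (j.castLE (Nat.le_of_dvd (NeZero.pos n) hkn))
  invFun c := ⟨fun i => c (i : ℕ), periodic_comp_natCast_val hkn c⟩
  left_inv a := Subtype.ext <| funext fun i => by
    rw [a.2.apply_eq_apply_val_mod i]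
    refine congrArg a.1 (Fin.ext ?_)
    simp [val_natCast]
  right_inv c := funext fun j => by simp

theorem prod_ofFn_comp_natCast_val {M : Type*} [Monoid M] (hkn : k ∣ n) (c : Fin k → M) :
    (List.ofFn fun i : Fin n => c (i : ℕ)).prod = (List.ofFn c).prod ^ (n / k) := by
  obtain ⟨m, rfl⟩ := hkn
  have hblock (i : ℕ) (j : Fin k) : ((k * i + j : ℕ) : Fin k) = j := by
    simp only [Nat.cast_add, cast_val_eq_self, add_eq_right, natCast_eq_zero, dvd_mul_right]
  rw [List.ofFn_mul', Nat.mul_div_cancel_left _ (NeZero.pos k)]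
  simp only [hblock]
  simp [List.prod_flatten]

end Periodic

def prodOfFnTailEquiv {G : Type*} [Group G] (p : G → Prop) (k : ℕ) :
    {c : Fin (k + 1) → G // p (List.ofFn c).prod} ≃ {g : G // p g} × (Fin k → G) where
  toFun c := (⟨(List.ofFn c.1).prod, c.2⟩, tail c.1)
  invFun gt := ⟨cons (gt.1.1 * (List.ofFn gt.2).prod⁻¹) gt.2, by
    simpa only [List.ofFn_cons, List.prod_cons, inv_mul_cancel_right] using gt.1.2⟩
  left_inv := by
    rintro ⟨c, hc⟩
    induction c using consCases
    simp only [List.ofFn_cons, List.prod_cons, tail_cons, mul_inv_cancel_right]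
  right_inv gt := by
    simp only [List.ofFn_cons, List.prod_cons, tail_cons, inv_mul_cancel_right]

end Fin

theorem card_fixed_identity_product_tuples_general (G : Type*) [Group G] [Fintype G]
    (n k : ℕ) [NeZero n] (hkn : k ∣ n) :
    Nat.card {a : Fin n → G //
        (List.ofFn a).prod = 1 ∧ ∀ i : Fin n, a (i + (k : Fin n)) = a i}
      = Nat.card {g : G // g ^ (n / k) = 1} * Fintype.card G ^ (k - 1) := by
  obtain ⟨k, rfl⟩ :=
    Nat.exists_eq_add_one_of_ne_zero (Nat.pos_of_dvd_of_pos hkn (NeZero.pos n)).ne'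
  have hfixed : {a : Fin n → G // (List.ofFn a).prod = 1 ∧ Function.Periodic a (k + 1 : ℕ)} ≃
      {c : Fin (k + 1) → G // (List.ofFn c).prod ^ (n / (k + 1)) = 1} :=
    (Equiv.subtypeEquivRight fun _ => and_comm).trans <|
      (Equiv.subtypeSubtypeEquivSubtypeInter _ _).symm.trans <|
        ((Fin.periodicEquiv hkn).symm.subtypeEquiv fun c => by
          rw [← Fin.prod_ofFn_comp_natCast_val hkn]; rfl).symm
  refine (Nat.card_congr <| hfixed.trans <|
    Fin.prodOfFnTailEquiv (fun g : G => g ^ (n / (k + 1)) = 1) k).trans ?_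
  rw [Nat.card_prod, Nat.card_fun, Nat.card_fin, Nat.card_eq_fintype_card (α := G),
    Nat.add_sub_cancel]

/-- The number of identity-product `n`-tuples fixed by cyclic rotation by `k` steps
(for `k ∣ n`) is `[G ÷ (n/k)] ⬝ |G|^(k-1)`. -/
theorem card_fixed_identity_product_tuples (G : Type*) [Group G] [Fintype G]
    (n k : ℕ) [NeZero n] (hk : 0 < k) (hkn : k ∣ n) :
    Nat.card {a : Fin n → G //
        (List.ofFn a).prod = 1 ∧ ∀ i : Fin n, a (i + (k : Fin n)) = a i}
      = Nat.card {g : G // g ^ (n / k) = 1} * Fintype.card G ^ (k - 1) :=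
  card_fixed_identity_product_tuples_general G n k hkn
end

section
/- Let G be a finite group and n a positive integer. The number of orbits of the cyclic rotation action of Cₙ on the set G₁ⁿ = {(a₁,...,aₙ) ∈ Gⁿ : a₁a₂⋯aₙ = 1} equals (1/n) · ∑_{d|n} φ(n/d) · [G ÷ (n/d)] · |G|^{d-1}. -/
/-! By Burnside's lemma, `n` times the number of necklaces is the sum over `r ∈ ℤ/n` of the
number of product-one tuples fixed by the rotation by `r`. That rotation generates the same
cyclic subgroup as the rotation by `d = gcd(n, r)`, so its fixed tuples are the `d`-periodic
ones `b ∘ (· mod d)` with `b ∈ Gᵈ`; the product of such a tuple is `(∏ b)^(n/d)`, so there are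
`[G ÷ n/d] ⬝ |G|^(d-1)` of them. Finally, exactly `φ(n/d)` residues `r` have `gcd(n, r) = d`. -/

open AddAction Function

theorem Nat.sum_fin_gcd_eq_sum_divisors_totient {M : Type*} [AddCommMonoid M] (n : ℕ)
    (f : ℕ → M) : ∑ r : Fin n, f (n.gcd r) = ∑ d ∈ n.divisors, (n / d).totient • f d := by
  rw [Fin.sum_univ_eq_sum_range (fun k => f (n.gcd k)),
    ← Finset.sum_fiberwise_of_maps_to (g := n.gcd) (t := n.divisors)
      fun k hk => Nat.mem_divisors.2 ⟨n.gcd_dvd_left k, by rintro rfl; simp at hk⟩]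
  refine Finset.sum_congr rfl fun d hd => ?_
  rw [Nat.totient_div_of_dvd (Nat.dvd_of_mem_divisors hd), ← Finset.sum_const]
  exact Finset.sum_congr rfl fun k hk => by rw [(Finset.mem_filter.1 hk).2]

theorem AddAction.card_orbits_mul_card_addGroup_eq_sum (G X : Type*) [AddGroup G] [Fintype G]
    [AddAction G X] [Finite X] :
    Nat.card (orbitRel.Quotient G X) * Nat.card G = ∑ g : G, Nat.card (fixedBy X g) := by
  have := Fintype.ofFinite X
  classical
  simp only [Nat.card_eq_fintype_card]
  exact (sum_card_fixedBy_eq_card_orbits_mul_card_addGroup G X).symm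

theorem AddAction.fixedBy_eq_of_zmultiples_eq {G α : Type*} [AddGroup G] [AddAction G α]
    {g h : G} (hgh : AddSubgroup.zmultiples g = AddSubgroup.zmultiples h) :
    fixedBy α g = fixedBy α h := by
  have key : ∀ {g h : G}, g ∈ AddSubgroup.zmultiples h → fixedBy α h ⊆ fixedBy α g := by
    rintro g h ⟨k, rfl⟩
    exact fixedBy_subset_fixedBy_zsmul α h k
  exact (key (hgh ▸ AddSubgroup.mem_zmultiples h)).antisymm
    (key (hgh ▸ AddSubgroup.mem_zmultiples g))

open Fin.CommRing in
theorem Fin.zmultiples_eq_zmultiples_natCast_gcd {n : ℕ} [NeZero n] (r : Fin n) :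
    AddSubgroup.zmultiples r = AddSubgroup.zmultiples ((n.gcd r : ℕ) : Fin n) := by
  apply le_antisymm
  · rw [AddSubgroup.zmultiples_le]
    convert AddSubgroup.nsmul_mem_zmultiples _ (r / n.gcd r : ℕ)
    rw [nsmul_eq_mul, ← Nat.cast_mul, Nat.div_mul_cancel (Nat.gcd_dvd_right _ _),
      Fin.cast_val_eq_self]
  · rw [AddSubgroup.zmultiples_le, Nat.gcd_comm]
    rcases (Nat.gcd_le_right (m := r) (NeZero.pos n)).lt_or_eq with hlt | heq
    · obtain ⟨m, -, hm⟩ := Nat.exists_mul_mod_eq_gcd hlt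
      convert AddSubgroup.nsmul_mem_zmultiples r m
      rw [← hm, nsmul_eq_mul]
      ext
      simp [Fin.val_mul, Nat.mul_comm]
    · rw [heq, Fin.natCast_self]
      exact zero_mem _

theorem Fin.modNat_surjective {m d : ℕ} (hm : 0 < m) :
    Surjective (Fin.modNat : Fin (m * d) → Fin d) :=
  have : Nonempty (Fin m) := ⟨⟨0, hm⟩⟩
  Prod.snd_surjective.comp finProdFinEquiv.symm.surjective

open Fin.CommRing in
theorem Fin.forall_add_natCast_eq_iff_exists_comp_modNat {α : Type*} {m d : ℕ} [NeZero (m * d)]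
    (a : Fin (m * d) → α) : (∀ i, a (i + d) = a i) ↔ ∃ b : Fin d → α, a = b ∘ Fin.modNat := by
  have hm : 0 < m := Nat.pos_of_mul_pos_right (NeZero.pos (m * d))
  constructor
  · intro h
    have h_nsmul : ∀ (k : ℕ) i, a (i + k • (d : Fin (m * d))) = a i := by
      intro k
      induction k with
      | zero => simp
      | succ k ih => intro i; rw [succ_nsmul, ← add_assoc, h, ih]
    have hle : d ≤ m * d := Nat.le_mul_of_pos_left d hm
    refine ⟨a ∘ Fin.castLE hle, funext fun i => ?_⟩
    have hi : Fin.castLE hle i.modNat + (i.divNat : ℕ) • (d : Fin (m * d)) = i := by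
      ext
      simp [nsmul_eq_mul, Fin.val_add, Fin.val_mul, Fin.modNat, Fin.divNat, Nat.mod_add_div',
        Nat.mod_eq_of_lt]
    calc a i = a (Fin.castLE hle i.modNat + (i.divNat : ℕ) • (d : Fin (m * d))) := by rw [hi]
      _ = _ := h_nsmul _ _
  · rintro ⟨b, rfl⟩ i
    simp only [Function.comp_apply]
    congr 1
    ext
    simp [Fin.modNat, Fin.val_add, Fin.val_natCast, Nat.mod_mod_of_dvd, Nat.add_mod]

theorem List.prod_ofFn_comp_modNat {M : Type*} [Monoid M] {m d : ℕ} (b : Fin d → M) :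
    (List.ofFn (b ∘ Fin.modNat : Fin (m * d) → M)).prod = (List.ofFn b).prod ^ m := by
  rw [List.ofFn_mul]
  simp [Fin.modNat, List.prod_flatten, Nat.mod_eq_of_lt, List.ofFn_const]

def Fin.prodTailEquiv (G : Type*) [Group G] (e : ℕ) : (Fin (e + 1) → G) ≃ G × (Fin e → G) where
  toFun b := ((List.ofFn b).prod, Fin.tail b)
  invFun p := Fin.cons (p.1 * (List.ofFn p.2).prod⁻¹) p.2
  left_inv b := by simp [List.ofFn_succ, ← Fin.tail_def]
  right_inv p := by simp [List.ofFn_succ]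

theorem Nat.card_subtype_prod_ofFn {G : Type*} [Group G] [Finite G] (P : G → Prop) {d : ℕ}
    (hd : 0 < d) :
    Nat.card {b : Fin d → G // P (List.ofFn b).prod} =
      Nat.card {g // P g} * Nat.card G ^ (d - 1) := by
  obtain ⟨e, rfl⟩ : ∃ e, d = e + 1 := ⟨d - 1, by omega⟩
  calc Nat.card {b : Fin (e + 1) → G // P (List.ofFn b).prod}
      = Nat.card {p : G × (Fin e → G) // P p.1} :=
        Nat.card_congr ((Fin.prodTailEquiv G e).subtypeEquiv fun _ => Iff.rfl)
    _ = _ := by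
      rw [Nat.card_congr Equiv.prodSubtypeFstEquivSubtypeProd, Nat.card_prod, Nat.card_fun]
      simp

theorem List.ofFn_comp_add_right {α : Type*} {n : ℕ} [NeZero n] (a : Fin n → α) (r : Fin n) :
    List.ofFn (fun i => a (i + r)) = (List.ofFn a).rotate r := by
  apply List.ext_getElem (by simp)
  intro i h _
  simp only [List.getElem_ofFn, List.getElem_rotate, List.length_ofFn]
  rfl

abbrev ProdEqOneTuple (G : Type*) [Group G] (n : ℕ) := {a : Fin n → G // (List.ofFn a).prod = 1}

namespace ProdEqOneTuple

open Fin.NatCast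

variable {G : Type*} [Group G] {n : ℕ} [NeZero n]

instance : AddAction (Fin n) (ProdEqOneTuple G n) where
  vadd r a := ⟨fun i => a.1 (i + r), by
    rw [List.ofFn_comp_add_right]; exact List.prod_rotate_eq_one_of_prod_eq_one a.2 r⟩
  zero_vadd a := Subtype.ext <| funext fun i => congrArg a.1 (add_zero i)
  add_vadd r s a := Subtype.ext <| funext fun i => congrArg a.1 (add_assoc i r s).symm

theorem vadd_apply (r : Fin n) (a : ProdEqOneTuple G n) (i : Fin n) :
    (r +ᵥ a).1 i = a.1 (i + r) := rfl

theorem mem_fixedBy_iff {r : Fin n} {a : ProdEqOneTuple G n} :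
    a ∈ fixedBy (ProdEqOneTuple G n) r ↔ ∀ i, a.1 (i + r) = a.1 i := by
  simp [mem_fixedBy, Subtype.ext_iff, funext_iff, vadd_apply]

theorem image_val_orbit (a : ProdEqOneTuple G n) :
    Subtype.val '' orbit (Fin n) a = {b | ∃ r : Fin n, ∀ i, b i = a.1 (i + r)} := by
  rw [orbit, ← Set.range_comp]
  ext b
  simp [funext_iff, eq_comm, vadd_apply]

theorem card_necklaces_eq_card_orbits :
    Nat.card {s : Set (Fin n → G) //
        ∃ a : Fin n → G, (List.ofFn a).prod = 1 ∧
          s = {b : Fin n → G | ∃ r : Fin n, ∀ i : Fin n, b i = a (i + r)}}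
      = Nat.card (orbitRel.Quotient (Fin n) (ProdEqOneTuple G n)) := by
  let f (q : orbitRel.Quotient (Fin n) (ProdEqOneTuple G n)) : Set (Fin n → G) :=
    Subtype.val '' q.orbit
  have hf : Injective f :=
    (Set.image_injective.2 Subtype.val_injective).comp orbitRel.Quotient.orbit_injective
  rw [← Nat.card_range_of_injective hf]
  refine Nat.card_congr (Equiv.subtypeEquivRight fun s => ?_)
  simp [f, Quotient.exists, image_val_orbit, eq_comm]

theorem card_fixedBy_natCast [Finite G] {d : ℕ} (hdn : d ∣ n) :
    Nat.card (fixedBy (ProdEqOneTuple G n) ((d : ℕ) : Fin n)) =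
      Nat.card {g : G // g ^ (n / d) = 1} * Nat.card G ^ (d - 1) := by
  obtain ⟨m, rfl⟩ : ∃ m, n = m * d := ⟨n / d, (Nat.div_mul_cancel hdn).symm⟩
  have hm : 0 < m := Nat.pos_of_mul_pos_right (NeZero.pos (m * d))
  have hd : 0 < d := Nat.pos_of_mul_pos_left (NeZero.pos (m * d))
  let f (b : {b : Fin d → G // (List.ofFn b).prod ^ m = 1}) :
      fixedBy (ProdEqOneTuple G (m * d)) ((d : ℕ) : Fin (m * d)) :=
    ⟨⟨b.1 ∘ Fin.modNat, by rw [List.prod_ofFn_comp_modNat, b.2]⟩,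
      mem_fixedBy_iff.2 <| (Fin.forall_add_natCast_eq_iff_exists_comp_modNat _).2 ⟨b.1, rfl⟩⟩
  have hf : Bijective f := by
    refine ⟨fun b c hbc => Subtype.ext ?_, fun a => ?_⟩
    · exact (Fin.modNat_surjective hm).injective_comp_right (congrArg (·.1.1) hbc)
    · obtain ⟨b, hb⟩ :=
        (Fin.forall_add_natCast_eq_iff_exists_comp_modNat _).1 (mem_fixedBy_iff.1 a.2)
      refine ⟨⟨b, ?_⟩, Subtype.ext (Subtype.ext hb.symm)⟩
      rw [← List.prod_ofFn_comp_modNat, ← hb, a.1.2]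
  rw [← Nat.card_congr (Equiv.ofBijective f hf),
    Nat.card_subtype_prod_ofFn (fun g : G => g ^ m = 1) hd, Nat.mul_div_cancel _ hd]

end ProdEqOneTuple

theorem card_identity_product_necklaces_general (G : Type*) [Group G] [Fintype G]
    (n : ℕ) :
    Nat.card {s : Set (Fin n → G) //
        ∃ a : Fin n → G, (List.ofFn a).prod = 1 ∧
          s = {b : Fin n → G | ∃ r : Fin n, ∀ i : Fin n, b i = a (i + r)}} * n
      = ∑ d ∈ n.divisors,
          Nat.totient (n / d) * Nat.card {g : G // g ^ (n / d) = 1}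
            * Fintype.card G ^ (d - 1) := by
  rcases n.eq_zero_or_pos with rfl | hn
  · simp
  have := NeZero.of_pos hn
  calc _ = Nat.card (orbitRel.Quotient (Fin n) (ProdEqOneTuple G n)) * Nat.card (Fin n) := by
        rw [ProdEqOneTuple.card_necklaces_eq_card_orbits, Nat.card_fin]
    _ = ∑ r : Fin n, Nat.card (fixedBy (ProdEqOneTuple G n) r) :=
        card_orbits_mul_card_addGroup_eq_sum _ _
    _ = ∑ r : Fin n,
          Nat.card {g : G // g ^ (n / n.gcd r) = 1} * Nat.card G ^ (n.gcd r - 1) := by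
        refine Finset.sum_congr rfl fun r _ => ?_
        rw [fixedBy_eq_of_zmultiples_eq (Fin.zmultiples_eq_zmultiples_natCast_gcd r),
          ProdEqOneTuple.card_fixedBy_natCast (Nat.gcd_dvd_left _ _)]
    _ = _ := by
        rw [Nat.sum_fin_gcd_eq_sum_divisors_totient n
          fun d => Nat.card {g : G // g ^ (n / d) = 1} * Nat.card G ^ (d - 1)]
        simp [Nat.card_eq_fintype_card, mul_assoc]

/-- The number of identity-product `n`-necklaces over a finite group `G`
(orbits of identity-product `n`-tuples under cyclic rotation), multiplied by `n`,
equals `∑_{d ∣ n} φ(n/d) ⬝ [G ÷ (n/d)] ⬝ |G|^(d-1)`. -/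
theorem card_identity_product_necklaces (G : Type*) [Group G] [Fintype G]
    (n : ℕ) [NeZero n] :
    Nat.card {s : Set (Fin n → G) //
        ∃ a : Fin n → G, (List.ofFn a).prod = 1 ∧
          s = {b : Fin n → G | ∃ r : Fin n, ∀ i : Fin n, b i = a (i + r)}} * n
      = ∑ d ∈ n.divisors,
          Nat.totient (n / d) * Nat.card {g : G // g ^ (n / d) = 1}
            * Fintype.card G ^ (d - 1) :=
  card_identity_product_necklaces_general G n
end

section
/- Let G = ∏_{i=1}^m C_{k_i} be a finite product of cyclic groups of orders k₁,...,k_m, and n a positive integer. Then the number of orbits under cyclic rotation of n-tuples in Gⁿ whose entries sum (multiply) to the identity equals (1/n) ∑_{d|n} φ(n/d) · ∏_{i=1}^m ( gcd(k_i, n/d) · k_i^{d-1} ). -/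
/-!
By Burnside's lemma, `n` times the number of necklaces is the sum over the rotations `r` of the
number of zero-sum tuples fixed by `r`. A tuple fixed by `r` is a function on the `n / e` cosets
of `⟨r⟩`, where `e` is the order of `r`; every coset has `e` elements, so the zero-sum condition
says that `e` times the sum over the cosets vanishes, which leaves `|G[e]| * |G| ^ (n / e - 1)`
tuples.
A cyclic group of order `n` has `φ e` elements of order `e ∣ n`, and in `G = ∏ C_{k_i}` the
`e`-torsion has `∏ gcd(k_i, e)` elements; putting `e = n / d` gives the formula.
-/

open Finset

theorem ZMod.card_nsmul_eq_zero (k e : ℕ) [NeZero k] :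
    Nat.card {x : ZMod k // e • x = 0} = k.gcd e := by
  simpa [Nat.card_zmod] using IsAddCyclic.card_nsmulAddMonoidHom_ker (ZMod k) e

theorem card_pi_zmod_nsmul_eq_zero {ι : Type*} [Fintype ι] (k : ι → ℕ) [∀ i, NeZero (k i)]
    (e : ℕ) : Nat.card {x : (i : ι) → ZMod (k i) // e • x = 0} = ∏ i, (k i).gcd e := by
  have htorsion (x : (i : ι) → ZMod (k i)) : e • x = 0 ↔ ∀ i, e • x i = 0 := by
    simp only [funext_iff, Pi.smul_apply, Pi.zero_apply]
  rw [Nat.card_congr ((Equiv.subtypeEquivRight htorsion).trans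
    (Equiv.subtypePiEquivPi (p := fun i (y : ZMod (k i)) => e • y = 0))), Nat.card_pi]
  exact prod_congr rfl fun i _ => ZMod.card_nsmul_eq_zero (k i) e

open scoped Fin.CommRing in
instance Fin.isAddCyclic (n : ℕ) [NeZero n] : IsAddCyclic (Fin n) :=
  ⟨1, fun x =>
    ⟨x.val, by simp only [natCast_zsmul, nsmul_eq_mul, mul_one, Fin.cast_val_eq_self]⟩⟩

theorem IsAddCyclic.sum_comp_addOrderOf {H M : Type*} [AddGroup H] [IsAddCyclic H] [Fintype H]
    [AddCommMonoid M] (f : ℕ → M) :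
    ∑ r : H, f (addOrderOf r) = ∑ d ∈ (Fintype.card H).divisors, d.totient • f d := by
  classical
  rw [← sum_fiberwise_of_maps_to (g := addOrderOf) (t := (Fintype.card H).divisors)
    fun r _ => Nat.mem_divisors.mpr ⟨addOrderOf_dvd_card, Fintype.card_ne_zero⟩]
  refine sum_congr rfl fun d hd => ?_
  rw [sum_congr rfl fun r hr => congrArg f (mem_filter.mp hr).2, sum_const,
    IsAddCyclic.card_addOrderOf_eq_totient (Nat.dvd_of_mem_divisors hd)]

theorem card_nsmul_sum_eq_zero {X A : Type*} [Fintype X] [Nonempty X] [AddCommGroup A] (e : ℕ) :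
    Nat.card {b : X → A // e • ∑ x, b x = 0} =
      Nat.card {a : A // e • a = 0} * Nat.card A ^ (Fintype.card X - 1) := by
  classical
  obtain ⟨x₀⟩ := ‹Nonempty X›
  let shear : A × ({x // x ≠ x₀} → A) ≃ A × ({x // x ≠ x₀} → A) :=
    { toFun p := (p.1 + ∑ x, p.2 x, p.2)
      invFun p := (p.1 - ∑ x, p.2 x, p.2)
      left_inv p := by simp
      right_inv p := by simp }
  let split := (Equiv.piSplitAt x₀ fun _ => A).trans shear
  have key : ∀ b : X → A, e • ∑ x, b x = 0 ↔ e • (split b).1 = 0 := fun b => by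
    simp [split, shear, Equiv.piSplitAt, Fintype.sum_eq_add_sum_subtype_ne b x₀]
  rw [Nat.card_congr ((Equiv.subtypeEquiv (q := fun p => e • p.1 = 0) split key).trans
      (Equiv.prodSubtypeFstEquivSubtypeProd (p := fun a : A => e • a = 0))),
    Nat.card_prod, Nat.card_fun, Nat.card_eq_fintype_card (α := {x // x ≠ x₀})]
  exact congrArg _ (congrArg _ (Set.card_ne_eq x₀))

section Periodic

variable {H : Type*} [AddGroup H]

theorem QuotientAddGroup.sum_comp_mk [Fintype H] {M : Type*} [AddCommMonoid M]
    (s : AddSubgroup H) [Fintype (H ⧸ s)] (f : H ⧸ s → M) :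
    ∑ h : H, f h = Nat.card s • ∑ q, f q := by
  classical
  rw [← Fintype.sum_fiberwise (fun h : H => (h : H ⧸ s)), smul_sum]
  refine sum_congr rfl fun q _ => ?_
  have hfiber : Nat.card {h : H // (h : H ⧸ s) = q} = Nat.card s :=
    (Nat.card_congr (QuotientAddGroup.preimageMkEquivAddSubgroupProdSet s {q})).trans (by simp)
  rw [sum_congr rfl fun h _ => congrArg f h.2, sum_const, card_univ, ← Nat.card_eq_fintype_card,
    hfiber]

def Function.periodicEquivQuotient (A : Type*) (r : H) :
    {a : H → A // Function.Periodic a r} ≃ (H ⧸ AddSubgroup.zmultiples r → A) where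
  toFun a := a.2.lift
  invFun b := ⟨fun h => b h, fun h => by simp [AddSubgroup.mem_zmultiples]⟩
  left_inv a := rfl
  right_inv b := by ext q; induction q using QuotientAddGroup.induction_on; rfl

theorem card_periodic_sum_eq_zero [Fintype H] {A : Type*} [AddCommGroup A] (r : H) :
    Nat.card {a : H → A // Function.Periodic a r ∧ ∑ j, a j = 0} =
      Nat.card {x : A // addOrderOf r • x = 0} *
        Nat.card A ^ (Fintype.card H / addOrderOf r - 1) := by
  classical
  have hcard : Nat.card (H ⧸ AddSubgroup.zmultiples r) = Fintype.card H / addOrderOf r := by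
    rw [← Nat.card_eq_fintype_card,
      AddSubgroup.card_eq_card_quotient_mul_card_addSubgroup (AddSubgroup.zmultiples r),
      Nat.card_zmultiples, Nat.mul_div_cancel _ (addOrderOf_pos r)]
  have hsum (a : {a : H → A // Function.Periodic a r}) :
      ∑ j, a.1 j = addOrderOf r • ∑ q, Function.periodicEquivQuotient A r a q := by
    rw [← Nat.card_zmultiples, ← QuotientAddGroup.sum_comp_mk]
    rfl
  rw [← Nat.card_congr (Equiv.subtypeSubtypeEquivSubtypeInter _ _),
    Nat.card_congr (Equiv.subtypeEquiv (q := fun b => addOrderOf r • ∑ q, b q = 0)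
      (Function.periodicEquivQuotient A r) fun a => by rw [hsum]),
    card_nsmul_sum_eq_zero, ← Nat.card_eq_fintype_card, hcard]

end Periodic

section Rotation

variable (H A : Type*) [AddGroup H] [Fintype H] [AddCommMonoid A]

abbrev ZeroSumTuple := {a : H → A // ∑ j, a j = 0}

def zeroSumNecklaces : Set (Set (H → A)) :=
  {s | ∃ a : H → A, (∑ j, a j = 0) ∧ s = {b | ∃ r, ∀ j, b j = a (j + r)}}

instance : AddAction H (ZeroSumTuple H A) where
  vadd r a := ⟨fun j => a.1 (j + r), (Equiv.sum_comp (Equiv.addRight r) a.1).trans a.2⟩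
  zero_vadd a := Subtype.ext <| funext fun j => congrArg a.1 (add_zero j)
  add_vadd r s a := Subtype.ext <| funext fun j => congrArg a.1 (add_assoc j r s).symm

variable {H A}

def ZeroSumTuple.fixedByEquiv (r : H) :
    AddAction.fixedBy (ZeroSumTuple H A) r ≃
      {a : H → A // Function.Periodic a r ∧ ∑ j, a j = 0} where
  toFun a := ⟨a.1.1, fun j => congrFun (congrArg Subtype.val a.2) j, a.1.2⟩
  invFun a := ⟨⟨a.1, a.2.2⟩, Subtype.ext (funext a.2.1)⟩

theorem ZeroSumTuple.image_val_orbit (a : ZeroSumTuple H A) :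
    Subtype.val '' AddAction.orbit H a = {b | ∃ r, ∀ j, b j = a.1 (j + r)} := by
  ext b
  simp only [Set.mem_image, AddAction.mem_orbit_iff]
  constructor
  · rintro ⟨_, ⟨r, rfl⟩, rfl⟩
    exact ⟨r, fun j => rfl⟩
  · rintro ⟨r, hr⟩
    exact ⟨r +ᵥ a, ⟨r, rfl⟩, funext fun j => (hr j).symm⟩

theorem card_zeroSum_necklaces :
    Nat.card (zeroSumNecklaces H A) =
      Nat.card (AddAction.orbitRel.Quotient H (ZeroSumTuple H A)) := by
  let necklace (a : ZeroSumTuple H A) : Set (H → A) := Subtype.val '' AddAction.orbit H a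
  have hker : Setoid.ker necklace = AddAction.orbitRel H (ZeroSumTuple H A) := by
    ext a a'
    exact Subtype.val_injective.image_injective.eq_iff.trans AddAction.orbit_eq_iff
  have hrange : zeroSumNecklaces H A = Set.range necklace := by
    ext s
    simp only [Set.mem_range, necklace, ZeroSumTuple.image_val_orbit, Subtype.exists]
    exact exists_congr fun a => by rw [exists_prop, @eq_comm _ _ s]
  rw [hrange, ← Nat.card_congr (Setoid.quotientKerEquivRange necklace), hker]

end Rotation

theorem card_zeroSum_necklaces_mul_card (H A : Type*) [AddGroup H] [Fintype H] [AddCommGroup A]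
    [Finite A] :
    Nat.card (zeroSumNecklaces H A) * Fintype.card H =
      ∑ r : H, Nat.card {x : A // addOrderOf r • x = 0} *
        Nat.card A ^ (Fintype.card H / addOrderOf r - 1) := by
  classical
  have : Fintype A := Fintype.ofFinite A
  rw [card_zeroSum_necklaces, Nat.card_eq_fintype_card,
    ← AddAction.sum_card_fixedBy_eq_card_orbits_mul_card_addGroup]
  refine sum_congr rfl fun r _ => ?_
  rw [← Nat.card_eq_fintype_card, Nat.card_congr (ZeroSumTuple.fixedByEquiv r),
    card_periodic_sum_eq_zero]

theorem card_zeroSum_necklaces_mul_card_of_isAddCyclic (H A : Type*) [AddGroup H] [IsAddCyclic H]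
    [Fintype H] [AddCommGroup A] [Finite A] :
    Nat.card (zeroSumNecklaces H A) * Fintype.card H =
      ∑ d ∈ (Fintype.card H).divisors, d.totient *
        (Nat.card {x : A // d • x = 0} * Nat.card A ^ (Fintype.card H / d - 1)) := by
  rw [card_zeroSum_necklaces_mul_card, IsAddCyclic.sum_comp_addOrderOf
    fun d => Nat.card {x : A // d • x = 0} * Nat.card A ^ (Fintype.card H / d - 1)]
  simp only [smul_eq_mul]

/-- For `G = ∏_{i=1}^m C_{k_i}` a product of cyclic groups, the number of
zero-sum `n`-necklaces (orbits under cyclic rotation of `n`-tuples summing to `0`),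
multiplied by `n`, equals `∑_{d ∣ n} φ(n/d) ⬝ ∏_i (gcd(k_i, n/d) ⬝ k_i^(d-1))`. -/
theorem card_identity_product_necklaces_product_cyclic
    (m : ℕ) (k : Fin m → ℕ) (hk : ∀ i, 0 < k i) (n : ℕ) [NeZero n] :
    Nat.card {s : Set (Fin n → ((i : Fin m) → ZMod (k i))) //
        ∃ a : Fin n → ((i : Fin m) → ZMod (k i)), (∑ j : Fin n, a j = 0) ∧
          s = {b | ∃ r : Fin n, ∀ j : Fin n, b j = a (j + r)}} * n
      = ∑ d ∈ n.divisors,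
          Nat.totient (n / d) * ∏ i : Fin m, (Nat.gcd (k i) (n / d) * (k i) ^ (d - 1)) := by
  have (i : Fin m) : NeZero (k i) := ⟨(hk i).ne'⟩
  have hcard := card_zeroSum_necklaces_mul_card_of_isAddCyclic (Fin n) ((i : Fin m) → ZMod (k i))
  rw [Fintype.card_fin] at hcard
  refine hcard.trans ?_
  rw [← Nat.sum_div_divisors]
  refine sum_congr rfl fun d hd => ?_
  rw [Nat.div_div_self (Nat.dvd_of_mem_divisors hd) (NeZero.ne n), card_pi_zmod_nsmul_eq_zero,
    Nat.card_pi, prod_mul_distrib, prod_pow]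
  simp only [Nat.card_zmod]
end

section
/- Let G be a finite group and n, k positive integers with k | n. The number of identity-product n-necklaces with smallest period k equals (1/k) ∑_{d|k} μ(k/d) · [G ÷ (n/d)] · |G|^{d-1}. -/
/-!
A tuple fixed by the `d`-fold rotation (`d ∣ n`) is the `n / d`-fold repetition of a `d`-tuple
`b`, with product `(∏ b) ^ (n / d)`; the first entry of `b` is determined by that product and the
other `d - 1` entries, so there are `[G ÷ n/d] |G|^(d-1)` such tuples with product `1`. Sorting
these by their exact period `e ∣ d` and inverting with Möbius counts the identity-product tuples
of smallest period `k`, and those fall into rotation orbits of exactly `k` elements each.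
-/

open Fin.NatCast Function Set

namespace Function

variable {α : Type*} {f : α → α} {x y : α}

theorem minimalPeriod_eq_iff_of_pos {k : ℕ} (hk : 0 < k) :
    minimalPeriod f x = k ↔
      IsPeriodicPt f k x ∧ ∀ j, 0 < j → j < k → ¬IsPeriodicPt f j x := by
  refine ⟨?_, fun ⟨hper, hmin⟩ => ?_⟩
  · rintro rfl
    exact ⟨isPeriodicPt_minimalPeriod f x, fun j hj hjk =>
      not_isPeriodicPt_of_pos_of_lt_minimalPeriod hj.ne' hjk⟩
  · refine (hper.minimalPeriod_le hk).antisymm (not_lt.mp fun hlt => ?_)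
    exact hmin _ (hper.minimalPeriod_pos hk) hlt (isPeriodicPt_minimalPeriod f x)

theorem range_iterate_apply_iterate (hx : x ∈ periodicPts f) (m : ℕ) :
    range (f^[·] (f^[m] x)) = range (f^[·] x) := by
  have hx' : f^[m] x ∈ periodicPts f :=
    mk_mem_periodicPts (minimalPeriod_pos_of_mem_periodicPts hx)
      ((isPeriodicPt_minimalPeriod f x).apply_iterate m)
  ext y
  rw [mem_range, mem_range, ← mem_periodicOrbit_iff hx', ← mem_periodicOrbit_iff hx,
    periodicOrbit_apply_iterate_eq hx]

theorem range_iterate_eq_range_iterate_iff (hx : x ∈ periodicPts f) :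
    range (f^[·] y) = range (f^[·] x) ↔ y ∈ range (f^[·] x) := by
  refine ⟨fun h => h ▸ ⟨0, rfl⟩, ?_⟩
  rintro ⟨m, rfl⟩
  exact range_iterate_apply_iterate hx m

theorem card_range_iterate (hx : x ∈ periodicPts f) :
    Nat.card (range (f^[·] x)) = minimalPeriod f x := by
  have hrange : range (f^[·] x) = range fun m : Fin (minimalPeriod f x) => f^[m] x := by
    refine (range_subset_iff.mpr fun m => ?_).antisymm fun _ ⟨m, hm⟩ => ⟨m, hm⟩
    exact ⟨⟨m % minimalPeriod f x, Nat.mod_lt _ (minimalPeriod_pos_of_mem_periodicPts hx)⟩,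
      iterate_mod_minimalPeriod_eq⟩
  rw [hrange, Nat.card_range_of_injective, Nat.card_eq_fintype_card, Fintype.card_fin]
  intro i j hij
  exact Fin.ext ((iterate_eq_iterate_iff_of_lt_minimalPeriod i.2 j.2).mp hij)

theorem card_isPeriodicPt_eq_sum [Finite α] (p : α → Prop) {d : ℕ} (hd : 0 < d) :
    Nat.card {x // p x ∧ IsPeriodicPt f d x}
      = ∑ e ∈ d.divisors, Nat.card {x // p x ∧ minimalPeriod f x = e} := by
  classical
  have := Fintype.ofFinite α
  simp only [Nat.card_eq_fintype_card, Fintype.card_subtype]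
  rw [Finset.card_eq_sum_card_fiberwise (t := d.divisors) (f := minimalPeriod f)]
  · refine Finset.sum_congr rfl fun e he => congrArg Finset.card ?_
    ext x
    simp only [Finset.mem_filter, Finset.mem_univ, true_and, isPeriodicPt_iff_minimalPeriod_dvd]
    exact ⟨fun ⟨⟨hp, _⟩, he⟩ => ⟨hp, he⟩,
      fun ⟨hp, hxe⟩ => ⟨⟨hp, hxe ▸ Nat.dvd_of_mem_divisors he⟩, hxe⟩⟩
  · intro x hx
    rw [Finset.mem_coe, Finset.mem_filter_univ, isPeriodicPt_iff_minimalPeriod_dvd] at hx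
    exact Finset.mem_coe.mpr (Nat.mem_divisors.mpr ⟨hx.2, hd.ne'⟩)

theorem card_minimalPeriod_eq_sum_moebius [Finite α] (p : α → Prop) {k : ℕ} (hk : 0 < k) :
    (Nat.card {x // p x ∧ minimalPeriod f x = k} : ℤ)
      = ∑ d ∈ k.divisors,
          ArithmeticFunction.moebius (k / d) * Nat.card {x // p x ∧ IsPeriodicPt f d x} := by
  have hinversion := (ArithmeticFunction.sum_eq_iff_sum_mul_moebius_eq (R := ℤ)
    (f := fun e => Nat.card {x // p x ∧ minimalPeriod f x = e})
    (g := fun d => Nat.card {x // p x ∧ IsPeriodicPt f d x})).mp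
    (fun d hd => by exact_mod_cast (card_isPeriodicPt_eq_sum p hd).symm) k hk
  rw [← hinversion, ← Nat.sum_divisorsAntidiagonal' fun a b =>
    ArithmeticFunction.moebius a * (Nat.card {x // p x ∧ IsPeriodicPt f b x} : ℤ)]
  simp only [Int.cast_id]

theorem card_orbits_mul_eq_card [Finite α] {S : Set α} {k : ℕ} (hS : MapsTo f S S) (hk : 0 < k)
    (hSk : ∀ x ∈ S, minimalPeriod f x = k) :
    Nat.card {s : Set α // ∃ x ∈ S, s = range (f^[·] x)} * k = Nat.card S := by
  set T := {s : Set α // ∃ x ∈ S, s = range (f^[·] x)}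
  have := Fintype.ofFinite T
  let orbit : S → T := fun x => ⟨range (f^[·] x), x, x.2, rfl⟩
  have hper : ∀ x ∈ S, x ∈ periodicPts f := fun x hx =>
    minimalPeriod_pos_iff_mem_periodicPts.mp (hSk x hx ▸ hk)
  have hfiber : ∀ t : T, Nat.card {x : S // orbit x = t} = k := by
    rintro ⟨_, x, hx, rfl⟩
    have hsub : range (f^[·] x) ⊆ S := range_subset_iff.mpr fun m => hS.iterate m hx
    have hmem y := range_iterate_eq_range_iterate_iff (y := y) (hper x hx)
    rw [← hSk x hx, ← card_range_iterate (hper x hx)]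
    exact Nat.card_congr
      { toFun y := ⟨y.1, (hmem _).mp (congrArg Subtype.val y.2)⟩
        invFun y := ⟨⟨y, hsub y.2⟩, Subtype.ext ((hmem _).mpr y.2)⟩
        left_inv y := rfl
        right_inv y := rfl }
  rw [← Nat.card_congr (Equiv.sigmaFiberEquiv orbit), Nat.card_sigma]
  simp [hfiber, Nat.card_eq_fintype_card]

end Function

theorem List.ofFn_add_eq_rotate {α : Type*} {n : ℕ} (a : Fin n → α) (r : Fin n) :
    List.ofFn (fun i => a (i + r)) = (List.ofFn a).rotate r := by
  refine List.ext_getElem (by simp) fun i _ _ => ?_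
  simp only [List.getElem_ofFn, List.getElem_rotate, List.length_ofFn]
  congr 1

namespace Necklace

variable {G : Type*} {n : ℕ}

theorem card_prod_ofFn_succ [Group G] (p : G → Prop) (e : ℕ) :
    Nat.card {b : Fin (e + 1) → G // p (List.ofFn b).prod}
      = Nat.card {g // p g} * Nat.card G ^ e := by
  rw [← Nat.card_fin e, ← Nat.card_fun, ← Nat.card_prod, Nat.card_fin]
  exact Nat.card_congr
    { toFun b := (⟨(List.ofFn b.1).prod, b.2⟩, Fin.tail b.1)
      invFun x := ⟨Fin.cons (x.1.1 * (List.ofFn x.2).prod⁻¹) x.2,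
        by simpa [List.ofFn_succ] using x.1.2⟩
      left_inv b := by ext : 1; simp [List.ofFn_succ, ← Fin.tail_def]
      right_inv x := by ext <;> simp [List.ofFn_succ] }

variable {d : ℕ}

def repeatTuple (hdn : d ∣ n) (b : Fin d → G) : Fin n → G :=
  Fin.repeat (n / d) b ∘ Fin.cast (Nat.div_mul_cancel hdn).symm

theorem prod_ofFn_repeatTuple [Monoid G] (hdn : d ∣ n) (b : Fin d → G) :
    (List.ofFn (repeatTuple hdn b)).prod = (List.ofFn b).prod ^ (n / d) := by
  rw [repeatTuple, comp_def, ← List.ofFn_congr (Nat.div_mul_cancel hdn), List.ofFn_fin_repeat,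
    List.prod_flatten, List.map_replicate, List.prod_replicate]

variable [NeZero n]

def rotate (a : Fin n → G) : Fin n → G := fun i => a (i + 1)

theorem iterate_rotate (a : Fin n → G) (m : ℕ) : rotate^[m] a = fun i => a (i + m) := by
  induction m generalizing a with
  | zero => simp
  | succ m ih => simp [iterate_succ_apply, ih, rotate, Nat.cast_succ, add_assoc]

theorem isPeriodicPt_rotate_iff {a : Fin n → G} {m : ℕ} :
    IsPeriodicPt rotate m a ↔ ∀ i, a (i + m) = a i := by
  rw [IsPeriodicPt, IsFixedPt, iterate_rotate, funext_iff]

theorem mem_periodicPts_rotate (a : Fin n → G) : a ∈ periodicPts rotate :=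
  mk_mem_periodicPts (Nat.pos_of_neZero n) (isPeriodicPt_rotate_iff.mpr fun i => by simp)

theorem range_iterate_rotate (a : Fin n → G) :
    range (rotate^[·] a) = {b | ∃ r : Fin n, ∀ i, b i = a (i + r)} := by
  ext b
  simp only [iterate_rotate, mem_range, mem_ofPred_eq, funext_iff, eq_comm (a := b _)]
  exact ⟨fun ⟨m, hm⟩ => ⟨m, hm⟩, fun ⟨r, hr⟩ => ⟨r, by simpa using hr⟩⟩

theorem prod_ofFn_rotate_eq_one [Group G] {a : Fin n → G} (h : (List.ofFn a).prod = 1) :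
    (List.ofFn (rotate a)).prod = 1 := by
  unfold rotate
  rw [List.ofFn_add_eq_rotate]
  exact List.prod_rotate_eq_one_of_prod_eq_one h _

theorem repeatTuple_injective (hdn : d ∣ n) : Injective (repeatTuple (G := G) hdn) := by
  intro b c hbc
  funext j
  have hj : j.val < n := j.2.trans_le (Nat.le_of_dvd (Nat.pos_of_neZero n) hdn)
  simpa [repeatTuple, Fin.modNat, Nat.mod_eq_of_lt j.2] using congrFun hbc ⟨j, hj⟩

theorem range_repeatTuple (hdn : d ∣ n) :
    range (repeatTuple (G := G) hdn) = {a | IsPeriodicPt rotate d a} := by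
  have hdn' : d ≤ n := Nat.le_of_dvd (Nat.pos_of_neZero n) hdn
  ext a
  constructor
  · rintro ⟨b, rfl⟩
    refine isPeriodicPt_rotate_iff.mpr fun i => ?_
    simp [repeatTuple, Fin.modNat, Fin.val_add, Nat.mod_mod_of_dvd _ hdn]
  · intro ha
    refine ⟨fun j => a ⟨j, j.2.trans_le hdn'⟩, funext fun i => ?_⟩
    have hd : 0 < d := Nat.pos_of_dvd_of_pos hdn (Nat.pos_of_neZero n)
    have hi := isPeriodicPt_rotate_iff.mp (ha.mul_const (i.val / d))
      ⟨i.val % d, (Nat.mod_lt _ hd).trans_le hdn'⟩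
    refine hi.symm.trans (congrArg a (Fin.ext ?_))
    simp [Fin.val_add, Nat.mod_add_div, Nat.mod_eq_of_lt]

theorem card_prod_ofFn_eq_one_isPeriodicPt [Group G] (hdn : d ∣ n) :
    Nat.card {a : Fin n → G // (List.ofFn a).prod = 1 ∧ IsPeriodicPt rotate d a}
      = Nat.card {g : G // g ^ (n / d) = 1} * Nat.card G ^ (d - 1) := by
  have himage : {a : Fin n → G | (List.ofFn a).prod = 1 ∧ IsPeriodicPt rotate d a}
      = repeatTuple hdn '' {b | (List.ofFn b).prod ^ (n / d) = 1} := by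
    ext a
    constructor
    · rintro ⟨hprod, hper⟩
      obtain ⟨b, rfl⟩ : a ∈ range (repeatTuple hdn) := (range_repeatTuple hdn).symm ▸ hper
      exact ⟨b, (prod_ofFn_repeatTuple hdn b).symm.trans hprod, rfl⟩
    · rintro ⟨b, hb, rfl⟩
      exact ⟨(prod_ofFn_repeatTuple hdn b).trans hb,
        (range_repeatTuple hdn).subset (mem_range_self b)⟩
  obtain ⟨e, rfl⟩ :=
    Nat.exists_eq_add_one_of_ne_zero (Nat.pos_of_dvd_of_pos hdn (Nat.pos_of_neZero n)).ne'
  rw [← coe_ofPred, himage, Nat.card_image_of_injective (repeatTuple_injective hdn)]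
  exact card_prod_ofFn_succ (fun g => g ^ (n / (e + 1)) = 1) e

theorem exists_necklace_iff (p : (Fin n → G) → Prop) {k : ℕ} (hk : 0 < k)
    (s : Set (Fin n → G)) :
    (∃ a : Fin n → G, p a ∧ (∀ i : Fin n, a (i + (k : Fin n)) = a i) ∧
        (∀ j : ℕ, 0 < j → j < k → ¬ (∀ i : Fin n, a (i + (j : Fin n)) = a i)) ∧
        s = {b : Fin n → G | ∃ r : Fin n, ∀ i : Fin n, b i = a (i + r)})
      ↔ ∃ a ∈ {a | p a ∧ minimalPeriod rotate a = k}, s = range (rotate^[·] a) := by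
  simp only [minimalPeriod_eq_iff_of_pos hk, isPeriodicPt_rotate_iff, range_iterate_rotate,
    mem_ofPred_eq, and_assoc]

end Necklace

open Necklace

/-- The number of identity-product `n`-necklaces with smallest period `k` (for `k ∣ n`),
multiplied by `k`, equals `∑_{d ∣ k} μ(k/d) ⬝ [G ÷ (n/d)] ⬝ |G|^(d-1)`. -/
theorem card_identity_product_necklaces_smallest_period (G : Type*) [Group G] [Fintype G]
    (n k : ℕ) [NeZero n] (hk : 0 < k) (hkn : k ∣ n) :
    (Nat.card {s : Set (Fin n → G) //
        ∃ a : Fin n → G, (List.ofFn a).prod = 1 ∧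
          (∀ i : Fin n, a (i + (k : Fin n)) = a i) ∧
          (∀ j : ℕ, 0 < j → j < k → ¬ (∀ i : Fin n, a (i + (j : Fin n)) = a i)) ∧
          s = {b : Fin n → G | ∃ r : Fin n, ∀ i : Fin n, b i = a (i + r)}} : ℤ) * k
      = ∑ d ∈ k.divisors,
          ArithmeticFunction.moebius (k / d)
            * (Nat.card {g : G // g ^ (n / d) = 1} : ℤ)
            * (Fintype.card G : ℤ) ^ (d - 1) := by
  have hrotate : MapsTo rotate
      {a : Fin n → G | (List.ofFn a).prod = 1 ∧ minimalPeriod rotate a = k}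
      {a | (List.ofFn a).prod = 1 ∧ minimalPeriod rotate a = k} := fun a ha =>
    ⟨prod_ofFn_rotate_eq_one ha.1, (minimalPeriod_apply (mem_periodicPts_rotate a)).trans ha.2⟩
  rw [Nat.card_congr (Equiv.subtypeEquivRight (exists_necklace_iff _ hk)), ← Nat.cast_mul,
    card_orbits_mul_eq_card hrotate hk fun a ha => ha.2]
  refine (card_minimalPeriod_eq_sum_moebius (fun a : Fin n → G => (List.ofFn a).prod = 1) hk
    ).trans (Finset.sum_congr rfl fun d hd => ?_)
  rw [card_prod_ofFn_eq_one_isPeriodicPt ((Nat.dvd_of_mem_divisors hd).trans hkn),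
    Nat.card_eq_fintype_card (α := G)]
  push_cast
  ring
end

section
/- Let G be a finite group and n a positive integer. The number of orbits of the action of Cₙ × G on Gⁿ (where Cₙ acts by cyclic rotation and G acts by simultaneous left multiplication on all entries) equals the number of orbits of Cₙ acting by cyclic rotation on the set of n-tuples in Gⁿ whose entries multiply to the identity. -/
/-!
The map `a ↦ (aᵢ⁻¹ aᵢ₊₁)ᵢ` (indices mod `n`) kills simultaneous left multiplication, and its
fibres are exactly the `G`-orbits; it commutes with rotation, and its image is the set of tuples
with product `1` (telescoping one way, partial products the other). Hence it maps the
`Cₙ × G`-orbits bijectively onto the `Cₙ`-orbits of identity-product tuples.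
-/

theorem Nat.card_range_eq_of_forall_eq_iff {α β γ : Type*} {f : α → β} {g : α → γ}
    (h : ∀ a a', f a = f a' ↔ g a = g a') :
    Nat.card (Set.range f) = Nat.card (Set.range g) :=
  Nat.card_congr <| (Setoid.quotientKerEquivRange f).symm.trans <|
    (Quotient.congrRight h).trans (Setoid.quotientKerEquivRange g)

open Fin.NatCast in
theorem Fin.apply_eq_apply_zero_of_forall_add_one {n : ℕ} [NeZero n] {α : Type*}
    {f : Fin n → α} (h : ∀ i, f (i + 1) = f i) (i : Fin n) : f i = f 0 := by
  have key : ∀ k : ℕ, f k = f 0 := by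
    intro k
    induction k with
    | zero => simp
    | succ k ih => rw [Nat.cast_succ, h, ih]
  simpa using key i

theorem List.prod_ofFn_inv_mul_succ {G : Type*} [Group G] (g : ℕ → G) (m : ℕ) :
    (List.ofFn fun i : Fin m => (g i)⁻¹ * g (i + 1)).prod = (g 0)⁻¹ * g m := by
  have h := List.prod_range_div' m fun k => (g k)⁻¹
  simp only [div_eq_mul_inv, inv_inv] at h
  rw [← h]
  exact congrArg List.prod (List.ext_getElem (by simp) (by simp))

section Necklaces

variable {G : Type*} [Group G] {n : ℕ}

def homogeneousNecklace (a : Fin n → G) : Set (Fin n → G) :=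
  {b | ∃ r : Fin n, ∃ h : G, ∀ i, b i = h * a (i + r)}

def necklace (a : Fin n → G) : Set (Fin n → G) :=
  {b | ∃ r : Fin n, ∀ i, b i = a (i + r)}

variable [NeZero n]

def cyclicQuotients (a : Fin n → G) : Fin n → G :=
  fun i => (a i)⁻¹ * a (i + 1)

theorem cyclicQuotients_rotate (a : Fin n → G) (r : Fin n) :
    cyclicQuotients (fun i => a (i + r)) = fun i => cyclicQuotients a (i + r) := by
  funext i
  simp only [cyclicQuotients, add_right_comm i 1 r]

theorem cyclicQuotients_eq_iff {a b : Fin n → G} :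
    cyclicQuotients a = cyclicQuotients b ↔ ∃ h : G, ∀ i, b i = h * a i := by
  constructor
  · intro hab
    have hconst : ∀ i, b (i + 1) * (a (i + 1))⁻¹ = b i * (a i)⁻¹ := by
      intro i
      have hi := congrFun hab i
      simp only [cyclicQuotients] at hi
      have hsucc : b (i + 1) = b i * ((a i)⁻¹ * a (i + 1)) := by rw [hi]; group
      rw [hsucc]
      group
    refine ⟨b 0 * (a 0)⁻¹, fun i => ?_⟩
    rw [← Fin.apply_eq_apply_zero_of_forall_add_one (f := fun i => b i * (a i)⁻¹) hconst i]
    group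
  · rintro ⟨h, hb⟩
    funext i
    simp only [cyclicQuotients, hb]
    group

theorem prod_cyclicQuotients (a : Fin n → G) : (List.ofFn (cyclicQuotients a)).prod = 1 := by
  open Fin.NatCast in
  have h := List.prod_ofFn_inv_mul_succ (fun k : ℕ => a k) n
  simp only [Nat.cast_add, Nat.cast_one, Fin.cast_val_eq_self, Fin.natCast_self,
    Nat.cast_zero, inv_mul_cancel] at h
  exact h

theorem exists_cyclicQuotients_eq {d : Fin n → G} (hd : (List.ofFn d).prod = 1) :
    ∃ a, cyclicQuotients a = d := by
  obtain ⟨m, rfl⟩ := Nat.exists_eq_succ_of_ne_zero (NeZero.ne n)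
  have hsucc : ∀ i : Fin (m + 1),
      Fin.partialProd d (i + 1).castSucc = Fin.partialProd d i.succ := by
    intro i
    induction i using Fin.lastCases with
    | last =>
      rw [Fin.last_add_one, Fin.castSucc_zero, Fin.partialProd_zero, Fin.succ_last,
        Fin.partialProd, Fin.val_last, List.take_of_length_le (by simp), hd]
    | cast j => rw [Fin.coeSucc_eq_succ, Fin.succ_castSucc]
  exact ⟨fun i => Fin.partialProd d i.castSucc, funext fun i => by
    simp only [cyclicQuotients, hsucc, Fin.partialProd_right_inv]⟩

theorem range_cyclicQuotients :
    Set.range (cyclicQuotients (G := G) (n := n)) = {d | (List.ofFn d).prod = 1} :=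
  Set.ext fun _ => ⟨by rintro ⟨a, rfl⟩; exact prod_cyclicQuotients a, exists_cyclicQuotients_eq⟩

theorem preimage_cyclicQuotients_necklace (a : Fin n → G) :
    cyclicQuotients ⁻¹' necklace (cyclicQuotients a) = homogeneousNecklace a := by
  ext b
  refine exists_congr fun r => ?_
  rw [← cyclicQuotients_eq_iff, cyclicQuotients_rotate, funext_iff]
  simp only [eq_comm]

theorem image_cyclicQuotients_homogeneousNecklace (a : Fin n → G) :
    cyclicQuotients '' homogeneousNecklace a = necklace (cyclicQuotients a) := by
  refine subset_antisymm ?_ fun d ⟨r, hd⟩ => ?_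
  · rw [Set.image_subset_iff, preimage_cyclicQuotients_necklace]
  · refine ⟨fun i => a (i + r), ⟨r, 1, fun i => (one_mul _).symm⟩, ?_⟩
    rw [cyclicQuotients_rotate]
    exact funext fun i => (hd i).symm

theorem homogeneousNecklace_eq_iff {a a' : Fin n → G} :
    homogeneousNecklace a = homogeneousNecklace a' ↔
      necklace (cyclicQuotients a) = necklace (cyclicQuotients a') := by
  constructor <;> intro h
  · rw [← image_cyclicQuotients_homogeneousNecklace, h, image_cyclicQuotients_homogeneousNecklace]
  · rw [← preimage_cyclicQuotients_necklace, h, preimage_cyclicQuotients_necklace]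

end Necklaces

theorem card_homogeneous_necklaces_eq_card_identity_product_necklaces_general
    (G : Type*) [Group G] (n : ℕ) [NeZero n] :
    Nat.card {s : Set (Fin n → G) //
        ∃ a : Fin n → G,
          s = {b : Fin n → G | ∃ r : Fin n, ∃ h : G, ∀ i : Fin n, b i = h * a (i + r)}}
      = Nat.card {s : Set (Fin n → G) //
          ∃ a : Fin n → G, (List.ofFn a).prod = 1 ∧
            s = {b : Fin n → G | ∃ r : Fin n, ∀ i : Fin n, b i = a (i + r)}} := by
  calc _ = Nat.card (Set.range (homogeneousNecklace (G := G) (n := n))) :=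
        Nat.card_congr <| Equiv.subtypeEquivRight fun s => by
          simp only [Set.mem_range, eq_comm, homogeneousNecklace]
    _ = Nat.card (Set.range (necklace ∘ cyclicQuotients (G := G) (n := n))) :=
        Nat.card_range_eq_of_forall_eq_iff fun _ _ => homogeneousNecklace_eq_iff
    _ = _ := by
        rw [Set.range_comp, range_cyclicQuotients]
        exact Nat.card_congr <| Equiv.subtypeEquivRight fun s => by
          simp only [Set.mem_image, Set.mem_ofPred_eq, eq_comm, necklace]

/-- The number of orbits of `Cₙ × G` acting on `Gⁿ` (rotation together with
simultaneous left multiplication) equals the number of orbits of `Cₙ` acting by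
rotation on the identity-product `n`-tuples. -/
theorem card_homogeneous_necklaces_eq_card_identity_product_necklaces
    (G : Type*) [Group G] [Fintype G] (n : ℕ) [NeZero n] :
    Nat.card {s : Set (Fin n → G) //
        ∃ a : Fin n → G,
          s = {b : Fin n → G | ∃ r : Fin n, ∃ h : G, ∀ i : Fin n, b i = h * a (i + r)}}
      = Nat.card {s : Set (Fin n → G) //
          ∃ a : Fin n → G, (List.ofFn a).prod = 1 ∧
            s = {b : Fin n → G | ∃ r : Fin n, ∀ i : Fin n, b i = a (i + r)}} :=
  card_homogeneous_necklaces_eq_card_identity_product_necklaces_general G n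
end

section
/- Let G be a finite group, K ⊆ G a subset closed under conjugation, and n a positive integer. The number of Cₙ-rotation orbits on the set G_Kⁿ = {(a₁,...,aₙ) ∈ Gⁿ : a₁⋯aₙ ∈ K} equals (1/n) ∑_{d|n} φ(n/d) · [G ÷ K ÷ (n/d)] · |G|^{d-1}, where [G ÷ K ÷ m] := |{g ∈ G : g^m ∈ K}|. -/
set_option linter.unusedSectionVars false
set_option maxHeartbeats 1000000

section necklaceAux

variable {G : Type*} [Group G]

private lemma ofFn_rot' {n : ℕ} [NeZero n] (a : Fin n → G) (r : Fin n) :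
    List.ofFn (fun i => a (i + r)) = (List.ofFn a).rotate r.val := by
  apply List.ext_get
  · simp
  intro i h1 h2
  rw [List.get_rotate, List.get_ofFn, List.get_ofFn]
  congr 1
  simp [Fin.ext_iff, Fin.add_def]

private lemma prod_rot' (l : List G) (k : ℕ) (hk : k ≤ l.length) :
    (l.rotate k).prod = (l.take k).prod⁻¹ * l.prod * (l.take k).prod := by
  rw [List.rotate_eq_drop_append_take hk, List.prod_append]
  have h : l.prod = (l.take k).prod * (l.drop k).prod := by
    rw [← List.prod_append, List.take_append_drop]
  rw [h]; group

private lemma ofFn_cast' {α : Type*} {m m' : ℕ} (h : m = m') (f : Fin m' → α) :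
    List.ofFn (fun i : Fin m => f (Fin.cast h i)) = List.ofFn f := by
  subst h; rfl

private lemma prod_periodic' {d : ℕ} (hd : 0 < d) (b : Fin d → G) :
    ∀ (c m : ℕ), m = c * d → ∀ x : Fin m → G,
      (∀ i : Fin m, x i = b ⟨i.val % d, Nat.mod_lt _ hd⟩) →
      (List.ofFn x).prod = (List.ofFn b).prod ^ c := by
  intro c
  induction c with
  | zero =>
      rintro m hm x hx
      subst hm
      simp
  | succ c ih =>
      rintro m hm x hx
      subst hm
      have h : c * d + d = (c + 1) * d := by ring
      rw [← ofFn_cast' h x, List.ofFn_add, List.prod_append, pow_succ]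
      congr 1
      · refine ih _ rfl _ fun i => ?_
        rw [hx]
        congr 1
      · have : (List.ofFn fun j : Fin d => x (Fin.cast h (Fin.natAdd (c * d) j)))
            = List.ofFn b := by
          refine congrArg _ (funext fun j => ?_)
          rw [hx]
          congr 1
          ext
          show (c * d + j.val) % d = j.val
          rw [Nat.add_comm, Nat.add_mul_mod_self_right, Nat.mod_eq_of_lt j.isLt]
        rw [this]

private lemma card_blocks' (d : ℕ) [Fintype G] (P : G → Prop) :
    Nat.card {b : Fin (d + 1) → G // P (List.ofFn b).prod}
      = Nat.card {g : G // P g} * Fintype.card G ^ d := by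
  have e : {b : Fin (d + 1) → G // P (List.ofFn b).prod}
      ≃ {g : G // P g} × (Fin d → G) :=
    { toFun := fun b => (⟨(List.ofFn b.1).prod, b.2⟩, fun j => b.1 j.succ)
      invFun := fun p => ⟨Fin.cons (p.1.1 * (List.ofFn p.2).prod⁻¹) p.2, by
        rw [List.ofFn_succ]
        simp [Fin.cons_succ, p.1.2]⟩
      left_inv := fun b => by
        apply Subtype.ext
        funext i
        refine Fin.cases ?_ (fun j => ?_) i
        · have : (List.ofFn b.1).prod = b.1 0 * (List.ofFn fun j => b.1 j.succ).prod := by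
            rw [List.ofFn_succ]; rfl
          simp [this]
        · simp [Fin.cons_succ]
      right_inv := fun p => by
        refine Prod.ext (Subtype.ext ?_) (funext fun j => ?_)
        · show (List.ofFn _).prod = p.1.1
          rw [List.ofFn_succ]
          simp [Fin.cons_succ]
        · simp [Fin.cons_succ] }
  rw [Nat.card_congr e, Nat.card_prod]
  simp [Nat.card_eq_fintype_card]

private lemma nsmul_val' {n : ℕ} [NeZero n] (m : ℕ) (t : Fin n) :
    (m • t).val = (m * t.val) % n := by
  induction m with
  | zero => simp [Nat.zero_mod]
  | succ m ih =>
      rw [succ_nsmul, Fin.add_def, ih]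
      show (m * t.val % n + t.val) % n = _
      rw [Nat.mod_add_mod, Nat.add_mul, Nat.one_mul]

private lemma exists_mul_mod' (r n : ℕ) [NeZero n] :
    ∃ k : ℕ, (k * r) % n = (Nat.gcd r n) % n := by
  have hb := Nat.gcd_eq_gcd_ab r n
  refine ⟨((Nat.gcdA r n : ZMod n)).val, ?_⟩
  have : ((Nat.gcdA r n : ZMod n)).val * r ≡ Nat.gcd r n [MOD n] := by
    have : (((((Nat.gcdA r n : ZMod n)).val * r : ℕ)) : ZMod n)
        = ((Nat.gcd r n : ℕ) : ZMod n) := by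
      push_cast
      rw [ZMod.natCast_val, ZMod.cast_id]
      have : ((Nat.gcd r n : ℤ) : ZMod n)
          = ((r * Nat.gcdA r n + n * Nat.gcdB r n : ℤ) : ZMod n) := by
        rw [← hb]
      push_cast at this
      simpa [mul_comm] using this.symm
    exact (ZMod.natCast_eq_natCast_iff _ _ _).mp this
  exact this

private lemma periodic_key' {n : ℕ} [NeZero n] (x : Fin n → G) (r : Fin n)
    (h : ∀ i, x (i + r) = x i) (i : Fin n) :
    x i = x ⟨i.val % Nat.gcd r.val n,
      lt_of_lt_of_le (Nat.mod_lt _ (Nat.gcd_pos_of_pos_right _ (Nat.pos_of_ne_zero (NeZero.ne n))))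
        (Nat.le_of_dvd (Nat.pos_of_ne_zero (NeZero.ne n)) (Nat.gcd_dvd_right _ _))⟩ := by
  have hn : 0 < n := Nat.pos_of_ne_zero (NeZero.ne n)
  set d := Nat.gcd r.val n with hdd
  have hd : 0 < d := Nat.gcd_pos_of_pos_right _ hn
  have step1 : ∀ (k : ℕ) (j : Fin n), x (j + k • r) = x j := by
    intro k
    induction k with
    | zero => intro j; simp
    | succ k ih =>
        intro j
        have : j + (k + 1) • r = (j + r) + k • r := by
          rw [succ_nsmul]; abel
        rw [this, ih, h]
  obtain ⟨k, hk⟩ := exists_mul_mod' r.val n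
  set s : Fin n := ⟨d % n, Nat.mod_lt _ hn⟩ with hs
  have hks : k • r = s := by
    apply Fin.ext
    rw [nsmul_val', hk]
  have step3 : ∀ (m : ℕ) (j : Fin n), x (j + m • s) = x j := by
    intro m j
    rw [← hks, ← mul_nsmul]
    exact step1 (k * m) j
  have hi : i = (⟨i.val % d, by
      exact lt_of_lt_of_le (Nat.mod_lt _ hd) (Nat.le_of_dvd hn (Nat.gcd_dvd_right _ _))⟩ : Fin n)
      + (i.val / d) • s := by
    apply Fin.ext
    symm
    rw [Fin.add_def, nsmul_val']
    show (i.val % d + (i.val / d * (d % n)) % n) % n = i.val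
    have h1 : (i.val / d * (d % n)) % n = (i.val / d * d) % n := by
      conv_lhs => rw [Nat.mul_mod]
      conv_rhs => rw [Nat.mul_mod]
      rw [Nat.mod_mod_of_dvd _ (dvd_refl n)]
    rw [h1, Nat.add_mod_mod, Nat.mod_add_div', Nat.mod_eq_of_lt i.isLt]
  conv_lhs => rw [hi]
  rw [step3]

end necklaceAux

/-- The number of `K`-product `n`-necklaces (orbits under cyclic rotation of tuples
whose product lies in a conjugation-closed subset `K`), multiplied by `n`, equals
`∑_{d ∣ n} φ(n/d) ⬝ [G ÷ K ÷ (n/d)] ⬝ |G|^(d-1)`. -/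
theorem card_K_product_necklaces (G : Type*) [Group G] [Fintype G] (K : Set G)
    (hK : ∀ g : G, ∀ x ∈ K, g * x * g⁻¹ ∈ K) (n : ℕ) [NeZero n] :
    Nat.card {s : Set (Fin n → G) //
        ∃ a : Fin n → G, (List.ofFn a).prod ∈ K ∧
          s = {b : Fin n → G | ∃ r : Fin n, ∀ i : Fin n, b i = a (i + r)}} * n
      = ∑ d ∈ n.divisors,
          Nat.totient (n / d) * Nat.card {g : G // g ^ (n / d) ∈ K}
            * Fintype.card G ^ (d - 1) := by
  classical
  have hn : 0 < n := Nat.pos_of_ne_zero (NeZero.ne n)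
  -- the space of tuples with product in K
  set X := {a : Fin n → G // (List.ofFn a).prod ∈ K} with hX
  have hmem : ∀ (r : Fin n) (a : Fin n → G), (List.ofFn a).prod ∈ K →
      (List.ofFn fun i => a (i + r)).prod ∈ K := by
    intro r a ha
    rw [ofFn_rot', prod_rot' _ r.val (by rw [List.length_ofFn]; exact r.isLt.le)]
    simpa using hK ((List.ofFn a).take r.val).prod⁻¹ _ ha
  letI act : AddAction (Fin n) X :=
    { vadd := fun r x => ⟨fun i => x.1 (i + r), hmem r x.1 x.2⟩
      zero_vadd := fun x => Subtype.ext (funext fun i => by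
        show x.1 (i + 0) = x.1 i
        rw [add_zero])
      add_vadd := fun r s x => Subtype.ext (funext fun i => by
        show x.1 (i + (r + s)) = x.1 ((i + r) + s)
        rw [add_assoc]) }
  letI : Fintype X := Subtype.fintype _
  letI : ∀ r : Fin n, Fintype (AddAction.fixedBy X r) := fun r => Fintype.ofFinite _
  letI : Fintype (Quotient (AddAction.orbitRel (Fin n) X)) := Fintype.ofFinite _
  -- Burnside
  have burnside := AddAction.sum_card_fixedBy_eq_card_orbits_mul_card_addGroup (Fin n) X
  -- relation lemmas
  have hvadd : ∀ (r : Fin n) (x : X) (i : Fin n), (r +ᵥ x).1 i = x.1 (i + r) := fun _ _ _ => rfl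
  -- orbit sets equivalence
  have hcards : Nat.card {s : Set (Fin n → G) //
        ∃ a : Fin n → G, (List.ofFn a).prod ∈ K ∧
          s = {b : Fin n → G | ∃ r : Fin n, ∀ i : Fin n, b i = a (i + r)}}
      = Nat.card (Quotient (AddAction.orbitRel (Fin n) X)) := by
    have Rtrans : ∀ (a b c : Fin n → G), (∃ r : Fin n, ∀ i, b i = a (i + r)) →
        (∃ s : Fin n, ∀ i, c i = b (i + s)) → ∃ t : Fin n, ∀ i, c i = a (i + t) := by
      rintro a b c ⟨r, hr⟩ ⟨s, hs⟩
      exact ⟨s + r, fun i => by rw [hs i, hr (i + s), add_assoc]⟩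
    have Rsymm : ∀ (a b : Fin n → G), (∃ r : Fin n, ∀ i, b i = a (i + r)) →
        ∃ r : Fin n, ∀ i, a i = b (i + r) := by
      rintro a b ⟨r, hr⟩
      refine ⟨-r, fun i => ?_⟩
      rw [hr (i + -r), add_assoc, neg_add_cancel, add_zero]
    let f : X → {s : Set (Fin n → G) //
        ∃ a : Fin n → G, (List.ofFn a).prod ∈ K ∧
          s = {b : Fin n → G | ∃ r : Fin n, ∀ i : Fin n, b i = a (i + r)}} :=
      fun x => ⟨{b | ∃ r : Fin n, ∀ i, b i = x.1 (i + r)}, x.1, x.2, rfl⟩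
    have hf : ∀ x y : X, (∃ r : Fin n, ∀ i, y.1 i = x.1 (i + r)) → f x = f y := by
      intro x y hxy
      apply Subtype.ext
      ext c
      constructor
      · intro hc
        exact Rtrans y.1 x.1 c (Rsymm x.1 y.1 hxy) hc
      · intro hc
        exact Rtrans x.1 y.1 c hxy hc
    let F : Quotient (AddAction.orbitRel (Fin n) X) → {s : Set (Fin n → G) //
        ∃ a : Fin n → G, (List.ofFn a).prod ∈ K ∧
          s = {b : Fin n → G | ∃ r : Fin n, ∀ i : Fin n, b i = a (i + r)}} :=
      Quotient.lift f (by
        intro x y hxy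
        obtain ⟨r, hr⟩ := AddAction.mem_orbit_iff.mp hxy
        refine (hf y x ⟨r, fun i => ?_⟩).symm
        rw [← hr]
        rfl)
    have hFbij : Function.Bijective F := by
      constructor
      · intro q1 q2
        refine Quotient.inductionOn₂ q1 q2 fun x y hq => ?_
        have hsets : ({b | ∃ r : Fin n, ∀ i, b i = x.1 (i + r)} : Set (Fin n → G))
            = {b | ∃ r : Fin n, ∀ i, b i = y.1 (i + r)} := congrArg Subtype.val hq
        have hy : y.1 ∈ {b : Fin n → G | ∃ r : Fin n, ∀ i, b i = x.1 (i + r)} := by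
          rw [hsets]
          exact ⟨0, fun i => by rw [add_zero]⟩
        obtain ⟨r, hr⟩ := hy
        refine (Quotient.sound (AddAction.mem_orbit_iff.mpr ⟨r, ?_⟩)).symm
        exact Subtype.ext (funext fun i => (hr i).symm)
      · rintro ⟨s, a, ha, rfl⟩
        exact ⟨⟦⟨a, ha⟩⟧, rfl⟩
    exact (Nat.card_congr (Equiv.ofBijective F hFbij)).symm
  -- fixed point cardinality
  have hcond : ∀ (r : Fin n) (x : AddAction.fixedBy X r) (i : Fin n),
      x.1.1 (i + r) = x.1.1 i := fun r x i => congrFun (congrArg Subtype.val x.2) i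
  have hfixcard : ∀ r : Fin n,
      Fintype.card (AddAction.fixedBy X r)
        = Nat.card {g : G // g ^ (n / Nat.gcd r.val n) ∈ K}
            * Fintype.card G ^ (Nat.gcd r.val n - 1) := by
    intro r
    set d := Nat.gcd r.val n with hdd
    have hd : 0 < d := Nat.gcd_pos_of_pos_right _ hn
    have hdvd : d ∣ n := Nat.gcd_dvd_right _ _
    have hdle : d ≤ n := Nat.le_of_dvd hn hdvd
    have hrd : d ∣ r.val := Nat.gcd_dvd_left _ _
    have hcd : n = (n / d) * d := (Nat.div_mul_cancel hdvd).symm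
    have E : AddAction.fixedBy X r ≃ {b : Fin d → G // (List.ofFn b).prod ^ (n / d) ∈ K} :=
      { toFun := fun x => ⟨fun t => x.1.1 ⟨t.val, lt_of_lt_of_le t.2 hdle⟩, by
          have hper : ∀ i : Fin n, x.1.1 i
              = (fun t : Fin d => x.1.1 ⟨t.val, lt_of_lt_of_le t.2 hdle⟩)
                  ⟨i.val % d, Nat.mod_lt _ hd⟩ :=
            fun i => periodic_key' x.1.1 r (hcond r x) i
          rw [← prod_periodic' hd _ (n / d) n hcd x.1.1 hper]
          exact x.1.2⟩
        invFun := fun b => ⟨⟨fun i => b.1 ⟨i.val % d, Nat.mod_lt _ hd⟩, by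
            rw [prod_periodic' hd b.1 (n / d) n hcd _ (fun i => rfl)]
            exact b.2⟩, by
          apply Subtype.ext
          funext i
          refine congrArg b.1 (Fin.ext ?_)
          show (i.val + r.val) % n % d = i.val % d
          rw [Nat.mod_mod_of_dvd _ hdvd, Nat.add_mod, Nat.mod_eq_zero_of_dvd hrd,
            Nat.add_zero, Nat.mod_mod_of_dvd _ (dvd_refl d)]⟩
        left_inv := fun x => by
          apply Subtype.ext
          apply Subtype.ext
          funext i
          exact (periodic_key' x.1.1 r (hcond r x) i).symm
        right_inv := fun b => by
          apply Subtype.ext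
          funext t
          refine congrArg b.1 (Fin.ext ?_)
          exact Nat.mod_eq_of_lt t.2 }
    obtain ⟨e, he⟩ := Nat.exists_eq_succ_of_ne_zero hd.ne'
    rw [← Nat.card_eq_fintype_card, Nat.card_congr E, he, Nat.succ_sub_one]
    exact card_blocks' e (fun g => g ^ (n / e.succ) ∈ K)
  -- put everything together
  rw [hcards, Nat.card_eq_fintype_card]
  have h2 : Fintype.card (Quotient (AddAction.orbitRel (Fin n) X)) * n
      = ∑ r : Fin n, Fintype.card (AddAction.fixedBy X r) := by
    have hb := burnside
    rw [Fintype.card_fin] at hb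
    exact hb.symm
  rw [h2]
  calc ∑ r : Fin n, Fintype.card (AddAction.fixedBy X r)
      = ∑ r : Fin n, (Nat.card {g : G // g ^ (n / Nat.gcd n r.val) ∈ K}
          * Fintype.card G ^ (Nat.gcd n r.val - 1)) := by
        refine Finset.sum_congr rfl fun r _ => ?_
        rw [hfixcard r, Nat.gcd_comm]
    _ = ∑ r ∈ Finset.range n, (Nat.card {g : G // g ^ (n / Nat.gcd n r) ∈ K}
          * Fintype.card G ^ (Nat.gcd n r - 1)) :=
        Fin.sum_univ_eq_sum_range
          (fun m => Nat.card {g : G // g ^ (n / Nat.gcd n m) ∈ K}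
            * Fintype.card G ^ (Nat.gcd n m - 1)) n
    _ = ∑ d ∈ n.divisors, ∑ r ∈ (Finset.range n).filter (fun r => Nat.gcd n r = d),
          (Nat.card {g : G // g ^ (n / Nat.gcd n r) ∈ K}
            * Fintype.card G ^ (Nat.gcd n r - 1)) :=
        (Finset.sum_fiberwise_of_maps_to
          (fun r _ => Nat.mem_divisors.mpr ⟨Nat.gcd_dvd_left n r, hn.ne'⟩) _).symm
    _ = ∑ d ∈ n.divisors, Nat.totient (n / d) * (Nat.card {g : G // g ^ (n / d) ∈ K}
          * Fintype.card G ^ (d - 1)) := by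
        refine Finset.sum_congr rfl fun d hd => ?_
        have hconst : ∀ r ∈ (Finset.range n).filter (fun r => Nat.gcd n r = d),
            (Nat.card {g : G // g ^ (n / Nat.gcd n r) ∈ K}
              * Fintype.card G ^ (Nat.gcd n r - 1))
            = (Nat.card {g : G // g ^ (n / d) ∈ K} * Fintype.card G ^ (d - 1)) := by
          intro r hr
          rw [(Finset.mem_filter.mp hr).2]
        rw [Finset.sum_congr rfl hconst, Finset.sum_const, smul_eq_mul,
          ← Nat.totient_div_of_dvd (Nat.dvd_of_mem_divisors hd)]
    _ = ∑ d ∈ n.divisors,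
          Nat.totient (n / d) * Nat.card {g : G // g ^ (n / d) ∈ K}
            * Fintype.card G ^ (d - 1) := by
        refine Finset.sum_congr rfl fun d _ => ?_
        rw [mul_assoc]
end
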